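/- arXiv:2309.17381 — 2 statements merged into one kernel-verified Lean document; each statement's English description precedes it below -/
import Mathlib

section
/- Let F be a field with a valuation ν : F → ℚ ∪ {∞} and let π ∈ F satisfy ν(π) = 1. Let O_A, …, O_H ∈ F^4 be eight vectors, each with minimum coordinate valuation 0, and let S ⊆ Λ = {A,…,H} be such that for every i ∈ S one has ν((O_i)_j) ≥ 1 for j = 2, 3, 4, while for every i ∉ S there is some j ∈ {2, 3, 4} with ν((O_i)_j) = 0. Define O′_i = (π·(O_i)_1, (O_i)_2, (O_i)_3, (O_i)_4) for i ∉ S and O′_i = ((O_i)_1, π^{−1}(O_i)_2, π^{−1}(O_i)_3, π^{−1}(O_i)_4) for i ∈ S. Then each O′_i again has minimum coordinate valuation 0, and for every 4-element subset Q ⊆ Λ one has det(O′_Q) = π^{1 − |Q ∩ S|} · det(O_Q); in particular ν(det O′_Q) = ν(det O_Q) + 1 − |Q ∩ S| = ν(det O_Q) − v_pt^S(Q) + v_pln^{Λ∖S}(Q). -/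
open Finset

noncomputable section

/-- The index set of Plücker coordinates: the 4-element subsets of the 8 labels
`Λ = {A,…,H} = Fin 8`. -/
abbrev PIdx : Type := {Q : Finset (Fin 8) // Q.card = 4}

/-- The point-coincidence vector `v_pt^T`, with `v_pt^T(Q) = max (0, |Q ∩ T| - 1)`. -/
def vpt (T : Finset (Fin 8)) : PIdx → ℚ := fun Q => max (((Q.1 ∩ T).card : ℚ) - 1) 0

/-- The line-coincidence vector `v_ln^T`, with `v_ln^T(Q) = max (0, |Q ∩ T| - 2)`. -/
def vln (T : Finset (Fin 8)) : PIdx → ℚ := fun Q => max (((Q.1 ∩ T).card : ℚ) - 2) 0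

/-- The plane-coincidence vector `v_pln^T`, with `v_pln^T(Q) = max (0, |Q ∩ T| - 3)`. -/
def vpln (T : Finset (Fin 8)) : PIdx → ℚ := fun Q => max (((Q.1 ∩ T).card : ℚ) - 3) 0

/-- An octad: an 8-tuple of points of `P³` given by coordinate vectors in `F⁴`. -/
abbrev Octad (F : Type) : Type := Fin 8 → Fin 4 → F

variable {F : Type} [Field F]

/-- The chosen affine representatives are normalized: every coordinate has valuation `≥ 0`
and the minimum coordinate valuation of every point is `0`. -/
def Normalized (v : AddValuation F (WithTop ℚ)) (O : Octad F) : Prop :=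
  ∀ i, (∀ j, 0 ≤ v (O i j)) ∧ ∃ j, v (O i j) = 0

/-- The 4×4 matrix whose columns are the four points of the octad indexed by `Q`. -/
def subMat (O : Octad F) (Q : PIdx) : Matrix (Fin 4) (Fin 4) F :=
  Matrix.of fun r c => O (Q.1.orderEmbOfFin Q.2 c) r

/-- `O` has Plücker valuation vector `w`, i.e. for every 4-element subset `Q` of the labels
the valuation of the corresponding Plücker coordinate is `w Q`. -/
def HasPluck (v : AddValuation F (WithTop ℚ)) (O : Octad F) (w : PIdx → ℚ) : Prop :=
  ∀ Q : PIdx, v ((subMat O Q).det) = ((w Q : ℚ) : WithTop ℚ)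

/-- `O'` is obtained from `O` by a projective linear transformation of `P³`
(composed with a rescaling of the affine representative of each point). -/
def PGLMove (O O' : Octad F) : Prop :=
  ∃ M : Matrix (Fin 4) (Fin 4) F, IsUnit M.det ∧
    ∃ c : Fin 8 → F, (∀ i, c i ≠ 0) ∧ ∀ i, O' i = c i • M.mulVec (O i)

/-- PGL-equivalence of valuation data: every octad with Plücker valuation vector `w` is
carried by some element of `PGL₄` to an octad with Plücker valuation vector `w'`, and
vice versa. -/
def PGLequiv (v : AddValuation F (WithTop ℚ)) (w w' : PIdx → ℚ) : Prop :=
  (∀ O : Octad F, Normalized v O → HasPluck v O w →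
      ∃ O' : Octad F, Normalized v O' ∧ PGLMove O O' ∧ HasPluck v O' w') ∧
  (∀ O : Octad F, Normalized v O → HasPluck v O w' →
      ∃ O' : Octad F, Normalized v O' ∧ PGLMove O O' ∧ HasPluck v O' w)

/-- A matrix with integral entries (valuations `≥ 0`). -/
def IntegralMat (v : AddValuation F (WithTop ℚ)) (M : Matrix (Fin 4) (Fin 4) F) : Prop :=
  ∀ i j, 0 ≤ v (M i j)

/-- An element of `GL₄(O)`: an invertible matrix with entries in the valuation ring whose
inverse also has entries in the valuation ring. -/
def GLIntegral (v : AddValuation F (WithTop ℚ)) (M : Matrix (Fin 4) (Fin 4) F) : Prop :=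
  IntegralMat v M ∧ ∃ N, IntegralMat v N ∧ M * N = 1 ∧ N * M = 1

/-- The five standard points `(1:0:0:0), (0:1:0:0), (0:0:1:0), (0:0:0:1), (1:1:1:1)`. -/
def stdFive : Fin 5 → Fin 4 → F :=
  ![![1, 0, 0, 0], ![0, 1, 0, 0], ![0, 0, 1, 0], ![0, 0, 0, 1], ![1, 1, 1, 1]]

/-- Five of the points of the octad are the five standard points of `P³`. -/
def FiveStandard (O : Octad F) : Prop :=
  ∃ ι : Fin 5 → Fin 8, Function.Injective ι ∧
    ∃ lam : Fin 5 → F, (∀ k, lam k ≠ 0) ∧ ∀ k, O (ι k) = lam k • stdFive k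

/-- Every octad with Plücker valuation vector `w` is carried by an element of `GL₄(O)` to an
octad five of whose points are the standard points. -/
def GLOStd (v : AddValuation F (WithTop ℚ)) (w : PIdx → ℚ) : Prop :=
  ∀ O : Octad F, Normalized v O → HasPluck v O w →
    ∃ M : Matrix (Fin 4) (Fin 4) F, GLIntegral v M ∧
      ∃ O' : Octad F, Normalized v O' ∧
        (∃ c : Fin 8 → F, (∀ i, c i ≠ 0) ∧ ∀ i, O' i = c i • M.mulVec (O i)) ∧
        FiveStandard O'

/-! In every 4×4 minor the rescaling multiplies the first row by `π` and the column of each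
point of `S` by `π⁻¹`, so the Plücker coordinate indexed by `Q` picks up the factor
`π ^ (1 - |Q ∩ S|)`. The rescaled points stay normalized: a point of `S` has its unit coordinate
in position `0`, which is left alone, while a point outside `S` keeps a unit coordinate among the
last three. With `k = |Q ∩ S|` and `|Q ∖ S| = 4 - k`, the last identity is
`(1 - k) + max (k - 1) 0 = max (1 - k) 0`. -/

def rescale (π : F) (S : Finset (Fin 8)) (O : Octad F) : Octad F := fun i j =>
  if i ∈ S then (if j = 0 then O i j else π⁻¹ * O i j)
  else (if j = 0 then π * O i j else O i j)

theorem rescale_eq_mul {π : F} (hπ : π ≠ 0) (S : Finset (Fin 8)) (O : Octad F) :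
    rescale π S O =
      fun i j => (if j = 0 then π else 1) * ((if i ∈ S then π⁻¹ else 1) * O i j) := by
  funext i j
  by_cases hi : i ∈ S <;> by_cases hj : j = 0 <;> simp [rescale, hi, hj, hπ]

theorem det_subMat_mul (a : Fin 4 → F) (b : Fin 8 → F) (O : Octad F) (Q : PIdx) :
    (subMat (fun i j => a j * (b i * O i j)) Q).det =
      (∏ j, a j) * (∏ i ∈ Q.1, b i) * (subMat O Q).det := by
  have hcols : ∏ c, b (Q.1.orderEmbOfFin Q.2 c) = ∏ i ∈ Q.1, b i := by
    conv_rhs => rw [← Finset.map_orderEmbOfFin_univ Q.1 Q.2]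
    rw [Finset.prod_map]
    rfl
  rw [← hcols, mul_assoc, ← Matrix.det_mul_row, ← Matrix.det_mul_column]
  rfl

theorem det_subMat_rescale {π : F} (hπ : π ≠ 0) (S : Finset (Fin 8)) (O : Octad F)
    (Q : PIdx) :
    (subMat (rescale π S O) Q).det =
      π ^ ((1 : ℤ) - (#(Q.1 ∩ S) : ℤ)) * (subMat O Q).det := by
  rw [rescale_eq_mul hπ, det_subMat_mul, Fintype.prod_ite_eq', Finset.prod_ite_mem,
    prod_const, zpow_sub₀ hπ, zpow_one, zpow_natCast, div_eq_mul_inv, inv_pow]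

theorem AddValuation.map_zpow_of_eq_coe (v : AddValuation F (WithTop ℚ)) {x : F} {q : ℚ}
    (hx : v x = q) (m : ℤ) : v (x ^ m) = ((m * q : ℚ) : WithTop ℚ) := by
  cases m with
  | ofNat n => simp [AddValuation.map_pow, hx, ← WithTop.coe_nsmul]
  | negSucc n =>
    simp only [zpow_negSucc, AddValuation.map_inv, AddValuation.map_pow, hx, ← WithTop.coe_nsmul,
      ← WithTop.LinearOrderedAddCommGroup.coe_neg, nsmul_eq_mul, Int.cast_negSucc, neg_mul]

theorem AddValuation.map_inv_mul_nonneg (v : AddValuation F (WithTop ℚ)) {x y : F}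
    (hxy : v x ≤ v y) (hx : v x ≠ ⊤) : 0 ≤ v (x⁻¹ * y) := by
  lift v x to ℚ using hx with q hq
  rw [AddValuation.map_mul, AddValuation.map_inv, ← hq]
  cases hy : v y with
  | top => simp
  | coe r =>
    rw [hy] at hxy
    rw [← WithTop.LinearOrderedAddCommGroup.coe_neg, ← WithTop.coe_add, ← WithTop.coe_zero,
      WithTop.coe_le_coe]
    linarith [WithTop.coe_le_coe.mp hxy]

theorem val_det_subMat_rescale {v : AddValuation F (WithTop ℚ)} {π : F}
    (hπ : v π = ((1 : ℚ) : WithTop ℚ)) (S : Finset (Fin 8)) (O : Octad F) (Q : PIdx) :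
    v (subMat (rescale π S O) Q).det =
      v (subMat O Q).det + ((1 - #(Q.1 ∩ S) : ℚ) : WithTop ℚ) := by
  rw [det_subMat_rescale (v.ne_top_iff.mp (by simp [hπ])), AddValuation.map_mul,
    v.map_zpow_of_eq_coe hπ, add_comm]
  push_cast [mul_one]
  rfl

theorem normalized_rescale {v : AddValuation F (WithTop ℚ)} {O : Octad F}
    (hN : Normalized v O) {π : F} (hπ : v π = ((1 : ℚ) : WithTop ℚ)) {S : Finset (Fin 8)}
    (hS : ∀ i ∈ S, ∀ j : Fin 4, j ≠ 0 → ((1 : ℚ) : WithTop ℚ) ≤ v (O i j))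
    (hS' : ∀ i ∉ S, ∃ j : Fin 4, j ≠ 0 ∧ v (O i j) = 0) :
    Normalized v (rescale π S O) := by
  intro i
  by_cases hi : i ∈ S
  · obtain ⟨j₀, hj₀⟩ := (hN i).2
    obtain rfl : j₀ = 0 := by
      by_contra h
      have h10 := hS i hi j₀ h
      rw [hj₀, ← WithTop.coe_zero, WithTop.coe_le_coe] at h10
      norm_num at h10
    refine ⟨fun j => ?_, 0, by simpa [rescale, hi] using hj₀⟩
    by_cases hj : j = 0
    · simpa [rescale, hi, hj] using (hN i).1 0
    · simp only [rescale, hi, hj, if_true, if_false]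
      exact v.map_inv_mul_nonneg (hπ ▸ hS i hi j hj) (by simp [hπ])
  · obtain ⟨j₀, hj₀, hv⟩ := hS' i hi
    refine ⟨fun j => ?_, j₀, by simpa [rescale, hi, hj₀] using hv⟩
    by_cases hj : j = 0
    · simp only [rescale, hi, hj, if_true, if_false, AddValuation.map_mul, hπ]
      exact add_nonneg (by exact_mod_cast zero_le_one) ((hN i).1 0)
    · simpa [rescale, hi, hj] using (hN i).1 j

theorem vpln_compl_eq (S : Finset (Fin 8)) (Q : PIdx) :
    vpln Sᶜ Q = vpt S Q + (1 - #(Q.1 ∩ S)) := by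
  have hcard : (#(Q.1 ∩ Sᶜ) : ℚ) = 4 - #(Q.1 ∩ S) := by
    have := Finset.card_sdiff_add_card_inter Q.1 S
    rw [Q.2] at this
    rw [← Finset.sdiff_eq_inter_compl, eq_sub_iff_add_eq]
    exact_mod_cast this
  have := max_zero_sub_eq_self ((#(Q.1 ∩ S) : ℚ) - 1)
  rw [neg_sub] at this
  simp only [vpln, vpt, hcard, show (4 : ℚ) - #(Q.1 ∩ S) - 3 = 1 - #(Q.1 ∩ S) by ring]
  linarith

/-- Rescaling the first coordinate by a uniformizer and renormalizing:
explicit effect on all Plücker coordinates and their valuations. -/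
theorem rescaling_effect_on_plucker
    (F : Type) [Field F] (v : AddValuation F (WithTop ℚ))
    (π : F) (hπ : v π = ((1 : ℚ) : WithTop ℚ))
    (O : Octad F) (hN : Normalized v O)
    (S : Finset (Fin 8))
    (hS : ∀ i ∈ S, ∀ j : Fin 4, j ≠ 0 → ((1 : ℚ) : WithTop ℚ) ≤ v (O i j))
    (hS' : ∀ i ∉ S, ∃ j : Fin 4, j ≠ 0 ∧ v (O i j) = 0)
    (O' : Octad F)
    (hO' : O' = fun i j =>
      if i ∈ S then (if j = 0 then O i j else π⁻¹ * O i j)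
      else (if j = 0 then π * O i j else O i j)) :
    Normalized v O' ∧
    (∀ Q : PIdx,
      (subMat O' Q).det = π ^ ((1 : ℤ) - ((Q.1 ∩ S).card : ℤ)) * (subMat O Q).det) ∧
    (∀ Q : PIdx,
      v ((subMat O' Q).det) =
        v ((subMat O Q).det) + ((1 - ((Q.1 ∩ S).card : ℚ) : ℚ) : WithTop ℚ)) ∧
    (∀ Q : PIdx,
      v ((subMat O' Q).det) + ((vpt S Q : ℚ) : WithTop ℚ) =
        v ((subMat O Q).det) + ((vpln Sᶜ Q : ℚ) : WithTop ℚ)) := by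
  obtain rfl : O' = rescale π S O := hO'
  have hπ0 : π ≠ 0 := v.ne_top_iff.mp (by simp [hπ])
  refine ⟨normalized_rescale hN hπ hS hS', det_subMat_rescale hπ0 S O,
    val_det_subMat_rescale hπ S O, fun Q => ?_⟩
  rw [val_det_subMat_rescale hπ, vpln_compl_eq, add_assoc, ← WithTop.coe_add, add_comm (1 - _)]
end
end

section
/- (i) The vectors v_pt^{AB} and v_pln^{CDEFGH} are PGL-equivalent valuation data. (ii) The vectors v_pln^{ABCD} + v_pln^{EFGH}, v_pln^{ABCD} + v_pt^{ABCD}, and v_pln^{EFGH} + v_pt^{EFGH} are pairwise PGL-equivalent valuation data. Moreover, every octad whose Plücker valuation vector is one of these vectors is carried by an element of GL_4(O_K̄) to an octad five of whose points are the standard points (1:0:0:0), (0:1:0:0), (0:0:1:0), (0:0:0:1), (1:1:1:1). -/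
open Finset

noncomputable section

variable {F : Type} [Field F]

/-! The moves are all built from one projective transformation. If the Plücker coordinate of four
labels `σ` is a unit, then by Cramer's rule `diag(d) · adj(O_σ)` sends the point `O_i` to the
vector whose `j`-th entry is `d_j` times the Plücker coordinate of `σ` with `σ j` replaced by `i`.
Choosing the valuations of the `d_j` and renormalizing every point therefore changes the Plücker
valuation vector by an explicit rule, and each equivalence reduces to a finite check over the
70 four-element subsets. If all Plücker coordinates among five labels are units, taking `d` inverse
to the coordinates of the fifth point gives a matrix in `GL₄(O)` that carries those five points to
the standard ones. -/

open scoped Matrix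
open Function

namespace AddValuation

variable {R Γ : Type*} [CommRing R] [LinearOrderedAddCommMonoidWithTop Γ] (v : AddValuation R Γ)

theorem map_prod {ι : Type*} (s : Finset ι) (f : ι → R) :
    v (∏ i ∈ s, f i) = ∑ i ∈ s, v (f i) := by
  induction s using Finset.cons_induction with
  | empty => simp
  | cons i s _ ih => rw [prod_cons, sum_cons, v.map_mul, ih]

theorem map_det_nonneg {n : Type*} [Fintype n] [DecidableEq n] (A : Matrix n n R)
    (hA : ∀ i j, 0 ≤ v (A i j)) : 0 ≤ v A.det := by
  rw [Matrix.det_apply]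
  refine v.map_le_sum fun σ _ => ?_
  rcases Int.units_eq_one_or (Equiv.Perm.sign σ) with hs | hs <;>
  · simp only [hs, one_smul, Units.neg_smul, v.map_neg, v.map_prod]
    exact sum_nonneg fun i _ => hA _ _

theorem map_adjugate_nonneg {n : Type*} [Fintype n] [DecidableEq n] (A : Matrix n n R)
    (hA : ∀ i j, 0 ≤ v (A i j)) (i j : n) : 0 ≤ v (A.adjugate i j) := by
  rw [Matrix.adjugate_apply]
  refine v.map_det_nonneg _ fun k l => ?_
  rw [Matrix.updateRow_apply]
  split_ifs
  · rw [Pi.single_apply]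
    split_ifs <;> simp
  · exact hA k l

end AddValuation

def colMat {R : Type} (O : Octad R) (g : Fin 4 → Fin 8) : Matrix (Fin 4) (Fin 4) R :=
  Matrix.of fun r c => O (g c) r

theorem subMat_eq_submatrix_sort {R : Type} (O : Octad R) {g : Fin 4 → Fin 8}
    (hg : Injective g) (Q : PIdx) (hQ : Q.1 = image g univ) :
    subMat O Q = (colMat O g).submatrix id (Tuple.sort g) := by
  have hmono : StrictMono (g ∘ Tuple.sort g) :=
    (Tuple.monotone_sort g).strictMono_of_injective (hg.comp (Tuple.sort g).injective)
  have := Finset.orderEmbOfFin_unique Q.2 (f := g ∘ Tuple.sort g) (fun k => by simp [hQ]) hmono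
  ext r c
  simp [subMat, colMat, ← this]

theorem updateCol_colMat {R : Type} (O : Octad R) (g : Fin 4 → Fin 8) (j : Fin 4) (i : Fin 8) :
    (colMat O g).updateCol j (O i) = colMat O (update g j i) := by
  ext r c
  by_cases h : c = j <;> simp [colMat, Function.update_apply, h]

section colMat

variable {R : Type} [CommRing R] (O : Octad R)

theorem det_colMat_of_not_injective {g : Fin 4 → Fin 8}
    (hg : ¬ Injective g) : (colMat O g).det = 0 := by
  obtain ⟨c, c', hcc, hne⟩ := Function.not_injective_iff.mp hg
  rw [← Matrix.det_transpose]
  exact Matrix.det_zero_of_row_eq hne (funext fun r => by simp [colMat, hcc])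

theorem diagonal_mul_adjugate_colMat_mulVec (σ : Fin 4 → Fin 8) (d : Fin 4 → R) (i : Fin 8) :
    (Matrix.diagonal d * (colMat O σ).adjugate) *ᵥ O i =
      fun j => d j * (colMat O (update σ j i)).det := by
  funext j
  rw [← Matrix.mulVec_mulVec, ← Matrix.cramer_eq_adjugate_mulVec, Matrix.mulVec_diagonal,
    Matrix.cramer_apply, updateCol_colMat]

theorem det_subMat_smul_mulVec (M : Matrix (Fin 4) (Fin 4) R) (c : Fin 8 → R) (Q : PIdx) :
    (subMat (fun i => c i • M *ᵥ O i) Q).det = M.det * (subMat O Q).det * ∏ i ∈ Q.1, c i := by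
  have hsub : subMat (fun i => c i • M *ᵥ O i) Q
      = M * subMat O Q * Matrix.diagonal (fun k => c (Q.1.orderEmbOfFin Q.2 k)) := by
    ext r k
    rw [Matrix.mul_diagonal]
    simp only [subMat, Matrix.of_apply, Pi.smul_apply, smul_eq_mul, Matrix.mul_apply,
      Matrix.mulVec, dotProduct]
    exact mul_comm _ _
  rw [hsub, Matrix.det_mul, Matrix.det_mul, Matrix.det_diagonal]
  conv_rhs => rw [← Q.1.map_orderEmbOfFin_univ Q.2, prod_map]
  rfl

end colMat

theorem HasPluck.val_det_colMat {v : AddValuation F (WithTop ℚ)} {O : Octad F} {w : PIdx → ℚ}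
    (hP : HasPluck v O w) {g : Fin 4 → Fin 8} (Q : PIdx) (hQ : Q.1 = image g univ) :
    v (colMat O g).det = w Q := by
  have hg : Injective g := by
    rw [← Set.injOn_univ, ← coe_univ, ← card_image_iff, ← hQ, Q.2, card_univ, Fintype.card_fin]
  rw [← hP Q, subMat_eq_submatrix_sort O hg Q hQ, Matrix.det_permute']
  rcases Int.units_eq_one_or (Equiv.Perm.sign (Tuple.sort g)) with hs | hs <;> simp [hs]

theorem val_det_diagonal_mul_adjugate {n : Type*} [Fintype n] [DecidableEq n]
    (v : AddValuation F (WithTop ℚ)) (d : n → F) {U : Matrix n n F} (hU : v U.det = 0) :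
    v (Matrix.diagonal d * U.adjugate).det = ∑ j, v (d j) := by
  rw [Matrix.det_mul, Matrix.det_diagonal, Matrix.det_adjugate, v.map_mul, v.map_pow, hU,
    v.map_prod]
  simp

theorem ne_zero_of_val_eq_coe {v : AddValuation F (WithTop ℚ)} {x : F} {q : ℚ}
    (h : v x = q) : x ≠ 0 := fun h0 => by simp [h0] at h

section Integral

variable {v : AddValuation F (WithTop ℚ)}

theorem IntegralMat.mulVec_nonneg {M : Matrix (Fin 4) (Fin 4) F} (hM : IntegralMat v M)
    {x : Fin 4 → F} (hx : ∀ j, 0 ≤ v (x j)) (j : Fin 4) : 0 ≤ v ((M *ᵥ x) j) := by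
  change 0 ≤ v (∑ m, M j m * x m)
  refine v.map_le_sum fun m _ => ?_
  rw [v.map_mul]
  exact add_nonneg (hM j m) (hx m)

theorem glIntegral_of_val_det {M : Matrix (Fin 4) (Fin 4) F} (hM : IntegralMat v M)
    (hdet : v M.det = 0) : GLIntegral v M := by
  have hunit : IsUnit M.det := isUnit_iff_ne_zero.mpr fun h => by simp [h] at hdet
  refine ⟨hM, M⁻¹, fun i j => ?_, M.mul_nonsing_inv hunit, M.nonsing_inv_mul hunit⟩
  rw [Matrix.inv_def, Matrix.smul_apply, smul_eq_mul, v.map_mul, Ring.inverse_eq_inv', v.map_inv,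
    hdet, neg_zero, zero_add]
  exact v.map_adjugate_nonneg M hM i j

theorem GLIntegral.mulVec {M : Matrix (Fin 4) (Fin 4) F} (hM : GLIntegral v M) {x : Fin 4 → F}
    (hx : (∀ j, 0 ≤ v (x j)) ∧ ∃ j, v (x j) = 0) :
    (∀ j, 0 ≤ v ((M *ᵥ x) j)) ∧ ∃ j, v ((M *ᵥ x) j) = 0 := by
  obtain ⟨hMint, N, hNint, -, hNM⟩ := hM
  refine ⟨hMint.mulVec_nonneg hx.1, ?_⟩
  by_contra! hpos
  obtain ⟨j, hj⟩ := hx.2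
  -- otherwise `x = N (M x)` would have all coordinates of positive valuation
  have : 0 < v (x j) := by
    rw [← Matrix.one_mulVec x, ← hNM, ← Matrix.mulVec_mulVec]
    change 0 < v (∑ m, N j m * (M *ᵥ x) m)
    refine v.map_lt_sum WithTop.zero_ne_top fun m _ => ?_
    rw [v.map_mul]
    exact ((hMint.mulVec_nonneg hx.1 m).lt_of_ne' (hpos m)).trans_le
        (le_add_of_nonneg_left (hNint j m))
  exact this.ne' hj

end Integral

/-- In the coordinates dual to the frame `σ`, the `j`-th coordinate of the point `i` is the
Plücker coordinate of `σ` with `σ j` replaced by `i`. Scaling that coordinate by an element of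
valuation `a j` and point `i` by one of valuation `-μ i`, where `μ i` is the smallest valuation of
its new coordinates, turns Plücker valuations `w` into `w'`. -/
def FrameRescaling {R : Type} [AddCommMonoid R] [LE R] (w w' : PIdx → R) (σ : Fin 4 → Fin 8)
    (a : Fin 4 → R) (μ : Fin 8 → R) : Prop :=
  (∃ Q : PIdx, Q.1 = image σ univ ∧ w Q = 0) ∧
  (∀ i j (Q : PIdx), Q.1 = image (update σ j i) univ → μ i ≤ a j + w Q) ∧
  (∀ i, ∃ j, ∃ Q : PIdx, Q.1 = image (update σ j i) univ ∧ μ i = a j + w Q) ∧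
  ∀ Q : PIdx, w' Q + ∑ i ∈ Q.1, μ i = w Q + ∑ j, a j

instance {R : Type} [AddCommMonoid R] [LE R] [DecidableEq R] [DecidableLE R] (w w' : PIdx → R)
    (σ : Fin 4 → Fin 8) (a : Fin 4 → R) (μ : Fin 8 → R) :
    Decidable (FrameRescaling w w' σ a μ) := by
  unfold FrameRescaling
  infer_instance

theorem FrameRescaling.natCast {w w' : PIdx → ℕ} {σ : Fin 4 → Fin 8} {a : Fin 4 → ℕ}
    {μ : Fin 8 → ℕ} (h : FrameRescaling w w' σ a μ) :
    FrameRescaling (fun Q => (w Q : ℚ)) (fun Q => (w' Q : ℚ)) σ (fun j => (a j : ℚ))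
      (fun i => (μ i : ℚ)) := by
  obtain ⟨⟨Q, hQ, h0⟩, hle, heq, hshift⟩ := h
  refine ⟨⟨Q, hQ, by simp [h0]⟩, fun i j Q hQ => by dsimp only; exact_mod_cast hle i j Q hQ,
    fun i => ?_, fun Q => by dsimp only; exact_mod_cast hshift Q⟩
  obtain ⟨j, Q, hQ, hμ⟩ := heq i
  exact ⟨j, Q, hQ, by dsimp only; exact_mod_cast hμ⟩

theorem FrameRescaling.exists_pglMove {v : AddValuation F (WithTop ℚ)}
    (hsurj : ∀ q : ℚ, ∃ x : F, v x = (q : WithTop ℚ)) {w w' : PIdx → ℚ} {σ : Fin 4 → Fin 8}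
    {a : Fin 4 → ℚ} {μ : Fin 8 → ℚ} (h : FrameRescaling w w' σ a μ) {O : Octad F}
    (hP : HasPluck v O w) : ∃ O' : Octad F, Normalized v O' ∧ PGLMove O O' ∧ HasPluck v O' w' := by
  obtain ⟨⟨Q₀, hQ₀, hw₀⟩, hle, heq, hshift⟩ := h
  have hU : v (colMat O σ).det = 0 := by rw [hP.val_det_colMat Q₀ hQ₀, hw₀]; rfl
  choose d hd using fun j => hsurj (a j)
  choose c hc using fun i => hsurj (-μ i)
  have hM : v (Matrix.diagonal d * (colMat O σ).adjugate).det = ((∑ j, a j : ℚ) : WithTop ℚ) := by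
    rw [val_det_diagonal_mul_adjugate v d hU]
    simp [hd]
  set M := Matrix.diagonal d * (colMat O σ).adjugate
  have hcoord : ∀ i j (Q : PIdx), Q.1 = image (update σ j i) univ →
      v ((c i • M *ᵥ O i) j) = ((-μ i + (a j + w Q) : ℚ) : WithTop ℚ) := by
    intro i j Q hQ
    rw [Pi.smul_apply, smul_eq_mul, diagonal_mul_adjugate_colMat_mulVec, v.map_mul, v.map_mul,
      hc, hd, hP.val_det_colMat Q hQ]
    norm_cast
  refine ⟨fun i => c i • M *ᵥ O i, fun i => ⟨fun j => ?_, ?_⟩,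
    ⟨M, isUnit_iff_ne_zero.mpr (ne_zero_of_val_eq_coe hM), c,
      fun i => ne_zero_of_val_eq_coe (hc i), fun i => rfl⟩, fun Q => ?_⟩
  · by_cases hcard : #(image (update σ j i) univ) = 4
    · rw [hcoord i j ⟨_, hcard⟩ rfl]
      have := hle i j ⟨_, hcard⟩ rfl
      exact_mod_cast (by linarith : (0 : ℚ) ≤ -μ i + (a j + w ⟨_, hcard⟩))
    · have hninj : ¬ Injective (update σ j i) := fun hinj =>
        hcard (by rw [card_image_of_injective _ hinj, card_univ, Fintype.card_fin])
      simp [M, diagonal_mul_adjugate_colMat_mulVec, det_colMat_of_not_injective O hninj]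
  · obtain ⟨j, Q, hQ, hμ⟩ := heq i
    exact ⟨j, by rw [hcoord i j Q hQ, hμ, neg_add_cancel]; rfl⟩
  · rw [det_subMat_smul_mulVec, v.map_mul, v.map_mul, hM, hP Q, v.map_prod]
    simp only [hc]
    norm_cast
    rw [sum_neg_distrib]
    linarith [hshift Q]

theorem stdFive_castSucc (p : Fin 4) : (stdFive p.castSucc : Fin 4 → F) = Pi.single p 1 := by
  fin_cases p <;> funext j <;> fin_cases j <;> rfl

theorem stdFive_last : (stdFive (Fin.last 4) : Fin 4 → F) = 1 := by
  funext j; fin_cases j <;> rfl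

theorem fiveStandard_of_frame {O : Octad F} {n : Fin 5 → Fin 8} (hn : Injective n)
    {lam : Fin 4 → F} (hlam : ∀ p, lam p ≠ 0)
    (hframe : ∀ p, O (n p.castSucc) = lam p • Pi.single p 1) (hunit : O (n (Fin.last 4)) = 1) :
    FiveStandard O := by
  refine ⟨n, hn, Fin.snoc lam 1, Fin.lastCases ?_ fun p => ?_, Fin.lastCases ?_ fun p => ?_⟩
  · rw [Fin.snoc_last]
    exact one_ne_zero
  · simpa using hlam p
  · rw [Fin.snoc_last, one_smul, hunit, stdFive_last]
  · simp [hframe, stdFive_castSucc]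

/-- The projective transformation taking the points `σ` to the coordinate points and `i₀` to
`(1 : 1 : 1 : 1)`. -/
def frameMat (O : Octad F) (σ : Fin 4 → Fin 8) (i₀ : Fin 8) : Matrix (Fin 4) (Fin 4) F :=
  Matrix.diagonal (fun j => (colMat O (update σ j i₀)).det⁻¹) * (colMat O σ).adjugate

section frameMat

variable (O : Octad F) (σ : Fin 4 → Fin 8) (i₀ : Fin 8)

theorem frameMat_mulVec_apply (i : Fin 8) (j : Fin 4) :
    (frameMat O σ i₀ *ᵥ O i) j =
      (colMat O (update σ j i₀)).det⁻¹ * (colMat O (update σ j i)).det := by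
  rw [frameMat, diagonal_mul_adjugate_colMat_mulVec]

theorem frameMat_mulVec_frame (p : Fin 4) :
    frameMat O σ i₀ *ᵥ O (σ p) =
      ((colMat O (update σ p i₀)).det⁻¹ * (colMat O σ).det) • Pi.single p 1 := by
  funext j
  rw [frameMat_mulVec_apply]
  by_cases hjp : j = p
  · subst hjp
    simp
  · have hninj : ¬ Injective (update σ j (σ p)) := fun hinj =>
      hjp (hinj (by simp [Function.update_apply]))
    simp [det_colMat_of_not_injective O hninj, hjp]

theorem frameMat_mulVec_unit (h : ∀ j, (colMat O (update σ j i₀)).det ≠ 0) :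
    frameMat O σ i₀ *ᵥ O i₀ = 1 := by
  funext j
  rw [frameMat_mulVec_apply, inv_mul_cancel₀ (h j)]
  rfl

end frameMat

theorem glOStd_of_five {v : AddValuation F (WithTop ℚ)} {w : PIdx → ℚ} (n : Fin 5 → Fin 8)
    (hn : Injective n) (hz : ∀ Q : PIdx, Q.1 ⊆ image n univ → w Q = 0) : GLOStd v w := by
  intro O hN hP
  have hval : ∀ τ : Fin 4 → Fin 5, Injective τ → v (colMat O (n ∘ τ)).det = 0 := by
    intro τ hτ
    have hcard : #(image (n ∘ τ) univ) = 4 := by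
      rw [card_image_of_injective _ (hn.comp hτ), card_univ, Fintype.card_fin]
    rw [hP.val_det_colMat ⟨_, hcard⟩ rfl, hz _ fun x hx => ?_]
    · rfl
    · obtain ⟨k, -, rfl⟩ := mem_image.mp hx
      exact mem_image_of_mem n (mem_univ _)
  have hU : v (colMat O (n ∘ Fin.castSucc)).det = 0 := hval _ (Fin.castSucc_injective 4)
  have hz0 : ∀ j, v (colMat O (update (n ∘ Fin.castSucc) j (n (Fin.last 4)))).det = 0 := by
    intro j
    rw [← comp_update]
    exact hval _ (by revert j; decide)
  have hM : GLIntegral v (frameMat O (n ∘ Fin.castSucc) (n (Fin.last 4))) := by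
    refine glIntegral_of_val_det (fun r c => ?_) ?_
    · rw [frameMat, Matrix.diagonal_mul, v.map_mul, v.map_inv, hz0, neg_zero, zero_add]
      exact v.map_adjugate_nonneg _ (fun r c => (hN _).1 r) r c
    · rw [frameMat, val_det_diagonal_mul_adjugate v _ hU]
      simp only [v.map_inv, hz0, neg_zero, sum_const_zero]
  refine ⟨_, hM, fun i => _ *ᵥ O i, fun i => hM.mulVec (hN i),
    ⟨1, fun _ => one_ne_zero, fun i => (one_smul _ _).symm⟩,
    fiveStandard_of_frame hn (fun p => mul_ne_zero (inv_ne_zero ?_) ?_)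
      (frameMat_mulVec_frame O (n ∘ Fin.castSucc) _)
      (frameMat_mulVec_unit O _ _ fun j => ne_zero_of_val_eq_coe (q := 0) (hz0 j))⟩
  · exact ne_zero_of_val_eq_coe (q := 0) (hz0 p)
  · exact ne_zero_of_val_eq_coe (q := 0) hU

theorem PGLMove.trans {O O' O'' : Octad F} (h : PGLMove O O') (h' : PGLMove O' O'') :
    PGLMove O O'' := by
  obtain ⟨M, hM, c, hc, hO'⟩ := h
  obtain ⟨M', hM', c', hc', hO''⟩ := h'
  refine ⟨M' * M, by rw [Matrix.det_mul]; exact hM'.mul hM, fun i => c' i * c i,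
    fun i => mul_ne_zero (hc' i) (hc i), fun i => ?_⟩
  rw [hO'', hO', Matrix.mulVec_smul, Matrix.mulVec_mulVec, mul_smul]

theorem PGLequiv.symm {v : AddValuation F (WithTop ℚ)} {w w' : PIdx → ℚ}
    (h : PGLequiv v w w') : PGLequiv v w' w :=
  ⟨h.2, h.1⟩

theorem PGLequiv.trans {v : AddValuation F (WithTop ℚ)} {w₁ w₂ w₃ : PIdx → ℚ}
    (h₁₂ : PGLequiv v w₁ w₂) (h₂₃ : PGLequiv v w₂ w₃) : PGLequiv v w₁ w₃ := by
  refine ⟨fun O hN hP => ?_, fun O hN hP => ?_⟩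
  · obtain ⟨O', hN', hm, hP'⟩ := h₁₂.1 O hN hP
    obtain ⟨O'', hN'', hm', hP''⟩ := h₂₃.1 O' hN' hP'
    exact ⟨O'', hN'', hm.trans hm', hP''⟩
  · obtain ⟨O', hN', hm, hP'⟩ := h₂₃.2 O hN hP
    obtain ⟨O'', hN'', hm', hP''⟩ := h₁₂.2 O' hN' hP'
    exact ⟨O'', hN'', hm.trans hm', hP''⟩

theorem pglEquiv_of_frameRescalings {v : AddValuation F (WithTop ℚ)}
    (hsurj : ∀ q : ℚ, ∃ x : F, v x = (q : WithTop ℚ)) {w w' : PIdx → ℕ}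
    (σ : Fin 4 → Fin 8) (a : Fin 4 → ℕ) (μ : Fin 8 → ℕ) (h : FrameRescaling w w' σ a μ)
    (σ' : Fin 4 → Fin 8) (a' : Fin 4 → ℕ) (μ' : Fin 8 → ℕ) (h' : FrameRescaling w' w σ' a' μ') :
    PGLequiv v (fun Q => (w Q : ℚ)) (fun Q => (w' Q : ℚ)) :=
  ⟨fun _ _ hP => h.natCast.exists_pglMove hsurj hP,
    fun _ _ hP => h'.natCast.exists_pglMove hsurj hP⟩

theorem glOStd_natCast {v : AddValuation F (WithTop ℚ)} {w : PIdx → ℕ} (n : Fin 5 → Fin 8)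
    (hn : Injective n) (hz : ∀ Q : PIdx, Q.1 ⊆ image n univ → w Q = 0) :
    GLOStd v (fun Q => (w Q : ℚ)) :=
  glOStd_of_five n hn fun Q hQ => by simp [hz Q hQ]

theorem natCast_tsub_eq_max {α : Type*} [Ring α] [LinearOrder α] [IsStrictOrderedRing α]
    (c m : ℕ) : ((c - m : ℕ) : α) = max ((c : α) - m) 0 := by
  rcases le_total m c with h | h
  · rw [Nat.cast_sub h, max_eq_left (sub_nonneg.mpr (by exact_mod_cast h))]
  · rw [Nat.sub_eq_zero_of_le h, Nat.cast_zero,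
      max_eq_right (sub_nonpos.mpr (by exact_mod_cast h))]

theorem vpt_eq_natCast (T : Finset (Fin 8)) : vpt T = fun Q => ((#(Q.1 ∩ T) - 1 : ℕ) : ℚ) := by
  funext Q
  rw [vpt, natCast_tsub_eq_max, Nat.cast_one]

theorem vpln_eq_natCast (T : Finset (Fin 8)) : vpln T = fun Q => ((#(Q.1 ∩ T) - 3 : ℕ) : ℚ) := by
  funext Q
  rw [vpln, natCast_tsub_eq_max, Nat.cast_ofNat]

theorem natCast_fun_add {α : Type*} (f g : α → ℕ) :
    ((fun x => (f x : ℚ)) + fun x => (g x : ℚ)) = fun x => ((f x + g x : ℕ) : ℚ) :=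
  funext fun x => (Nat.cast_add (f x) (g x)).symm

theorem pglEquiv_vpt_AB_vpln_CDEFGH {v : AddValuation F (WithTop ℚ)}
    (hsurj : ∀ q : ℚ, ∃ x : F, v x = (q : WithTop ℚ)) :
    PGLequiv v (vpt {0, 1}) (vpln {2, 3, 4, 5, 6, 7}) := by
  rw [vpt_eq_natCast, vpln_eq_natCast]
  exact pglEquiv_of_frameRescalings hsurj
    ![0, 2, 3, 4] ![1, 0, 0, 0] ![1, 1, 0, 0, 0, 0, 0, 0] (by decide)
    ![0, 2, 3, 4] ![0, 1, 1, 1] ![0, 0, 1, 1, 1, 1, 1, 1] (by decide)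

theorem pglEquiv_vpln_ABCD_add_vpln_EFGH_vpln_ABCD_add_vpt_ABCD {v : AddValuation F (WithTop ℚ)}
    (hsurj : ∀ q : ℚ, ∃ x : F, v x = (q : WithTop ℚ)) :
    PGLequiv v (vpln {0, 1, 2, 3} + vpln {4, 5, 6, 7}) (vpln {0, 1, 2, 3} + vpt {0, 1, 2, 3}) := by
  simp only [vpt_eq_natCast, vpln_eq_natCast, natCast_fun_add]
  exact pglEquiv_of_frameRescalings hsurj
    ![0, 4, 5, 6] ![0, 1, 1, 1] ![0, 0, 0, 0, 1, 1, 1, 1] (by decide)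
    ![0, 4, 5, 6] ![1, 0, 0, 0] ![1, 1, 1, 1, 0, 0, 0, 0] (by decide)

theorem pglEquiv_vpln_ABCD_add_vpln_EFGH_vpln_EFGH_add_vpt_EFGH {v : AddValuation F (WithTop ℚ)}
    (hsurj : ∀ q : ℚ, ∃ x : F, v x = (q : WithTop ℚ)) :
    PGLequiv v (vpln {0, 1, 2, 3} + vpln {4, 5, 6, 7}) (vpln {4, 5, 6, 7} + vpt {4, 5, 6, 7}) := by
  simp only [vpt_eq_natCast, vpln_eq_natCast, natCast_fun_add]
  exact pglEquiv_of_frameRescalings hsurj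
    ![0, 1, 2, 4] ![1, 1, 1, 0] ![1, 1, 1, 1, 0, 0, 0, 0] (by decide)
    ![0, 1, 2, 4] ![0, 0, 0, 1] ![0, 0, 0, 0, 1, 1, 1, 1] (by decide)

theorem alpha_blocks_PGL_equivalent_general
    (F : Type) [Field F] (v : AddValuation F (WithTop ℚ))
    (hsurj : ∀ q : ℚ, ∃ x : F, v x = (q : WithTop ℚ)) :
    PGLequiv v (vpt {0, 1}) (vpln {2, 3, 4, 5, 6, 7}) ∧
    PGLequiv v (vpln {0, 1, 2, 3} + vpln {4, 5, 6, 7}) (vpln {0, 1, 2, 3} + vpt {0, 1, 2, 3}) ∧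
    PGLequiv v (vpln {0, 1, 2, 3} + vpt {0, 1, 2, 3}) (vpln {4, 5, 6, 7} + vpt {4, 5, 6, 7}) ∧
    PGLequiv v (vpln {0, 1, 2, 3} + vpln {4, 5, 6, 7}) (vpln {4, 5, 6, 7} + vpt {4, 5, 6, 7}) ∧
    GLOStd v (vpt {0, 1}) ∧
    GLOStd v (vpln {2, 3, 4, 5, 6, 7}) ∧
    GLOStd v (vpln {0, 1, 2, 3} + vpln {4, 5, 6, 7}) ∧
    GLOStd v (vpln {0, 1, 2, 3} + vpt {0, 1, 2, 3}) ∧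
    GLOStd v (vpln {4, 5, 6, 7} + vpt {4, 5, 6, 7}) := by
  have hABCD := pglEquiv_vpln_ABCD_add_vpln_EFGH_vpln_ABCD_add_vpt_ABCD hsurj
  have hEFGH := pglEquiv_vpln_ABCD_add_vpln_EFGH_vpln_EFGH_add_vpt_EFGH hsurj
  refine ⟨pglEquiv_vpt_AB_vpln_CDEFGH hsurj, hABCD, hABCD.symm.trans hEFGH, hEFGH,
    ?_, ?_, ?_, ?_, ?_⟩ <;>
    simp only [vpt_eq_natCast, vpln_eq_natCast, natCast_fun_add]
  · exact glOStd_natCast ![2, 3, 4, 5, 6] (by decide) (by decide)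
  · exact glOStd_natCast ![0, 1, 2, 3, 4] (by decide) (by decide)
  · exact glOStd_natCast ![0, 1, 2, 4, 5] (by decide) (by decide)
  · exact glOStd_natCast ![0, 4, 5, 6, 7] (by decide) (by decide)
  · exact glOStd_natCast ![0, 1, 2, 3, 4] (by decide) (by decide)

/-- The `α`-block valuation data: (i) `v_pt^{AB}` and `v_pln^{CDEFGH}` are
PGL-equivalent; (ii) `v_pln^{ABCD} + v_pln^{EFGH}`, `v_pln^{ABCD} + v_pt^{ABCD}` and
`v_pln^{EFGH} + v_pt^{EFGH}` are pairwise PGL-equivalent.  Moreover, every octad with one of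
these Plücker valuation vectors is carried by an element of `GL₄(O)` to an octad five of whose
points are the standard points.  (Labels: `A,…,H = 0,…,7`.) -/
theorem alpha_blocks_PGL_equivalent
    (F : Type) [Field F] [IsAlgClosed F] (v : AddValuation F (WithTop ℚ))
    (hsurj : ∀ q : ℚ, ∃ x : F, v x = (q : WithTop ℚ))
    (hres : v 2 = 0) :
    PGLequiv v (vpt {0, 1}) (vpln {2, 3, 4, 5, 6, 7}) ∧
    PGLequiv v (vpln {0, 1, 2, 3} + vpln {4, 5, 6, 7}) (vpln {0, 1, 2, 3} + vpt {0, 1, 2, 3}) ∧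
    PGLequiv v (vpln {0, 1, 2, 3} + vpt {0, 1, 2, 3}) (vpln {4, 5, 6, 7} + vpt {4, 5, 6, 7}) ∧
    PGLequiv v (vpln {0, 1, 2, 3} + vpln {4, 5, 6, 7}) (vpln {4, 5, 6, 7} + vpt {4, 5, 6, 7}) ∧
    GLOStd v (vpt {0, 1}) ∧
    GLOStd v (vpln {2, 3, 4, 5, 6, 7}) ∧
    GLOStd v (vpln {0, 1, 2, 3} + vpln {4, 5, 6, 7}) ∧
    GLOStd v (vpln {0, 1, 2, 3} + vpt {0, 1, 2, 3}) ∧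
    GLOStd v (vpln {4, 5, 6, 7} + vpt {4, 5, 6, 7}) :=
  alpha_blocks_PGL_equivalent_general F v hsurj

end
end
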